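/- arXiv:2512.21998 — 2 statements merged into one kernel-verified Lean document; each statement's English description precedes it below -/
import Mathlib

section
/- Minimizing Tr(C E(D)) − log det(C) jointly over Hermitian positive definite C and all D, where E(D) = D^H (R_sig + R_other) D − D^H A½ − (A½)^H D + I, yields the optimal value L − log det(I + (A½)^H R_other⁻¹ A½); hence this joint minimization is equivalent to maximizing log det(I + R_other⁻¹ R_sig). -/
open Matrix ComplexOrder

variable {m : Type*} [Fintype m] [DecidableEq m]

private lemma trace_eq_sum_eig {A : Matrix m m ℂ} (hA : A.IsHermitian) :
    A.trace = ∑ i, (hA.eigenvalues i : ℂ) := by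
  conv_lhs => rw [hA.spectral_theorem]
  rw [Unitary.conjStarAlgAut_apply, trace_mul_cycle, Unitary.coe_star_mul_self, one_mul, trace_diagonal]
  simp

private lemma trace_re_nonneg' {A : Matrix m m ℂ} (hA : A.PosSemidef) : 0 ≤ A.trace.re := by
  rw [trace_eq_sum_eig hA.1, ← Complex.ofReal_sum, Complex.ofReal_re]
  exact Finset.sum_nonneg fun i _ => hA.eigenvalues_nonneg i

private lemma posDef_conj {C B : Matrix m m ℂ} (hC : C.PosDef) (hB : IsUnit B) :
    (Bᴴ * C * B).PosDef := by
  exact hC.conjTranspose_mul_mul_same (mulVec_injective_of_isUnit hB)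

private lemma pd_trace_log {S : Matrix m m ℂ} (hS : S.PosDef) :
    (Fintype.card m : ℝ) + Real.log S.det.re ≤ S.trace.re := by
  have hdet : S.det.re = ∏ i, hS.1.eigenvalues i := by
    rw [hS.1.det_eq_prod_eigenvalues]
    norm_cast
  have htr : S.trace.re = ∑ i, hS.1.eigenvalues i := by
    rw [trace_eq_sum_eig hS.1, ← Complex.ofReal_sum, Complex.ofReal_re]
  rw [hdet, htr, Real.log_prod (fun i _ => (hS.eigenvalues_pos i).ne')]
  have hcard : (Fintype.card m : ℝ) = ∑ _i : m, (1 : ℝ) := by simp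
  rw [hcard, ← Finset.sum_add_distrib]
  refine Finset.sum_le_sum fun i _ => ?_
  have := Real.log_le_sub_one_of_pos (hS.eigenvalues_pos i)
  linarith

open scoped MatrixOrder in
private lemma trace_mul_re_nonneg' {C P : Matrix m m ℂ} (hC : C.PosDef) (hP : P.PosSemidef) :
    0 ≤ (C * P).trace.re := by
  have hsq : CFC.sqrt P * CFC.sqrt P = P := CFC.sqrt_mul_sqrt_self P hP.nonneg
  have hH : (CFC.sqrt P).conjTranspose = CFC.sqrt P := (CFC.sqrt_nonneg P).posSemidef.1
  have h1 : (C * P).trace = ((CFC.sqrt P)ᴴ * C * CFC.sqrt P).trace := by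
    rw [trace_mul_cycle, hH, hsq, trace_mul_comm]
  rw [h1]
  exact trace_re_nonneg' (hC.posSemidef.conjTranspose_mul_mul_same (CFC.sqrt P))

open scoped MatrixOrder in
private lemma key_ineq {C E : Matrix m m ℂ} (hC : C.PosDef) (hE : E.PosDef) :
    (Fintype.card m : ℝ) + Real.log E.det.re ≤ (C * E).trace.re - Real.log C.det.re := by
  set B := CFC.sqrt E with hBdef
  have hBB : B * B = E := CFC.sqrt_mul_sqrt_self E hE.posSemidef.nonneg
  have hBH : Bᴴ = B := (CFC.sqrt_nonneg E).posSemidef.1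
  have hEdet : E.det ≠ 0 := hE.det_pos.ne'
  have hBdet : IsUnit B := by
    rw [Matrix.isUnit_iff_isUnit_det, isUnit_iff_ne_zero]
    intro h0
    apply hEdet
    rw [← hBB, det_mul, h0, mul_zero]
  have hS : (Bᴴ * C * B).PosDef := posDef_conj hC hBdet
  have htr : (Bᴴ * C * B).trace = (C * E).trace := by
    rw [trace_mul_cycle, hBH, hBB, trace_mul_comm]
  have hdet2 : (Bᴴ * C * B).det = C.det * E.det := by
    rw [det_mul, det_mul, hBH, ← hBB, det_mul]; ring
  have h := pd_trace_log hS
  rw [htr, hdet2] at h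
  obtain ⟨hCre, hCim⟩ := Complex.lt_def.mp hC.det_pos
  obtain ⟨hEre, hEim⟩ := Complex.lt_def.mp hE.det_pos
  simp only [Complex.zero_re, Complex.zero_im] at hCre hCim hEre hEim
  have hmul : (C.det * E.det).re = C.det.re * E.det.re := by
    rw [Complex.mul_re, ← hCim, ← hEim]; ring
  rw [hmul, Real.log_mul hCre.ne' hEre.ne'] at h
  linarith


/-- Joint minimization of `Tr(C E(D)) − log det C` over positive definite `C`
and all `D` attains `L − log det(I + A½ᴴ R_other⁻¹ A½)`, which equals
`L − log det(I + R_other⁻¹ R_sig)` (equivalence of P2 and P3). -/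
theorem stmt_6 (n L : ℕ) (Rsig Rother : Matrix (Fin n) (Fin n) ℂ)
    (Ahalf : Matrix (Fin n) (Fin L) ℂ)
    (hsig : Rsig = Ahalf * Ahalfᴴ) (hother : Rother.PosDef)
    (obj : Matrix (Fin L) (Fin L) ℂ → Matrix (Fin n) (Fin L) ℂ → ℝ)
    (hobj : ∀ C D, obj C D =
      (C * (Dᴴ * (Rsig + Rother) * D - Dᴴ * Ahalf - Ahalfᴴ * D + 1)).trace.re
        - Real.log (C.det.re)) :
    IsLeast {x : ℝ | ∃ C D, C.PosDef ∧ x = obj C D}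
      (L - Real.log ((1 + Ahalfᴴ * Rother⁻¹ * Ahalf).det.re)) ∧
    Real.log ((1 + Ahalfᴴ * Rother⁻¹ * Ahalf).det.re) =
      Real.log ((1 + Rother⁻¹ * Rsig).det.re) := by
  subst hsig
  have hR : (Ahalf * Ahalfᴴ + Rother).PosDef :=
    Matrix.PosDef.posSemidef_add (posSemidef_self_mul_conjTranspose Ahalf) hother
  have hRdet : IsUnit (Ahalf * Ahalfᴴ + Rother).det :=
    isUnit_iff_ne_zero.mpr hR.det_pos.ne'
  have hRodet : IsUnit Rother.det := isUnit_iff_ne_zero.mpr hother.det_pos.ne'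
  have hRR : (Ahalf * Ahalfᴴ + Rother) * (Ahalf * Ahalfᴴ + Rother)⁻¹ = 1 :=
    mul_nonsing_inv _ hRdet
  have hRiR : (Ahalf * Ahalfᴴ + Rother)⁻¹ * (Ahalf * Ahalfᴴ + Rother) = 1 :=
    nonsing_inv_mul _ hRdet
  have hRoiRo : Rother⁻¹ * Rother = 1 := nonsing_inv_mul _ hRodet
  have hRinvH : ((Ahalf * Ahalfᴴ + Rother)⁻¹)ᴴ = (Ahalf * Ahalfᴴ + Rother)⁻¹ := hR.1.inv
  have hc1 : ∀ X : Matrix (Fin n) (Fin L) ℂ,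
      (Ahalf * Ahalfᴴ + Rother) * ((Ahalf * Ahalfᴴ + Rother)⁻¹ * X) = X := fun X => by
    rw [← Matrix.mul_assoc, hRR, Matrix.one_mul]
  have hc2 : ∀ X : Matrix (Fin n) (Fin L) ℂ,
      (Ahalf * Ahalfᴴ + Rother)⁻¹ * ((Ahalf * Ahalfᴴ + Rother) * X) = X := fun X => by
    rw [← Matrix.mul_assoc, hRiR, Matrix.one_mul]
  have hc3 : ∀ X : Matrix (Fin n) (Fin L) ℂ, Rother⁻¹ * (Rother * X) = X := fun X => by
    rw [← Matrix.mul_assoc, hRoiRo, Matrix.one_mul]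
  have e0 : Ahalf * (Ahalfᴴ * ((Ahalf * Ahalfᴴ + Rother)⁻¹ * Ahalf)) =
      Ahalf - Rother * ((Ahalf * Ahalfᴴ + Rother)⁻¹ * Ahalf) := by
    have h1 := hc1 Ahalf
    rw [Matrix.add_mul, Matrix.mul_assoc] at h1
    exact eq_sub_of_add_eq h1
  have key : (1 + Ahalfᴴ * Rother⁻¹ * Ahalf) *
      (1 - Ahalfᴴ * (Ahalf * Ahalfᴴ + Rother)⁻¹ * Ahalf) = 1 := by
    simp only [Matrix.mul_sub, Matrix.sub_mul, Matrix.mul_add, Matrix.add_mul,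
      Matrix.one_mul, Matrix.mul_one, Matrix.mul_assoc, e0, Matrix.mul_sub, hc3]
    abel
  have hG : (1 + Ahalfᴴ * Rother⁻¹ * Ahalf).PosDef :=
    Matrix.PosDef.add_posSemidef Matrix.PosDef.one
      ((hother.inv).posSemidef.conjTranspose_mul_mul_same Ahalf)
  have hEmEq : (1 + Ahalfᴴ * Rother⁻¹ * Ahalf)⁻¹ =
      1 - Ahalfᴴ * (Ahalf * Ahalfᴴ + Rother)⁻¹ * Ahalf := inv_eq_right_inv key
  have hEmPD : (1 - Ahalfᴴ * (Ahalf * Ahalfᴴ + Rother)⁻¹ * Ahalf).PosDef :=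
    hEmEq ▸ hG.inv
  obtain ⟨hGre, hGim⟩ := Complex.lt_def.mp hG.det_pos
  obtain ⟨hEmre, hEmim⟩ := Complex.lt_def.mp hEmPD.det_pos
  simp only [Complex.zero_re, Complex.zero_im] at hGre hGim hEmre hEmim
  have hdetprod : (1 + Ahalfᴴ * Rother⁻¹ * Ahalf).det *
      (1 - Ahalfᴴ * (Ahalf * Ahalfᴴ + Rother)⁻¹ * Ahalf).det = 1 := by
    rw [← det_mul, key, det_one]
  have hre : (1 + Ahalfᴴ * Rother⁻¹ * Ahalf).det.re *
      (1 - Ahalfᴴ * (Ahalf * Ahalfᴴ + Rother)⁻¹ * Ahalf).det.re = 1 := by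
    have h := congrArg Complex.re hdetprod
    rw [Complex.mul_re, ← hGim, ← hEmim] at h
    simpa using h
  have hlog : Real.log (1 - Ahalfᴴ * (Ahalf * Ahalfᴴ + Rother)⁻¹ * Ahalf).det.re =
      - Real.log (1 + Ahalfᴴ * Rother⁻¹ * Ahalf).det.re := by
    rw [eq_inv_of_mul_eq_one_right hre, Real.log_inv]
  have hDecomp : ∀ D : Matrix (Fin n) (Fin L) ℂ,
      Dᴴ * (Ahalf * Ahalfᴴ + Rother) * D - Dᴴ * Ahalf - Ahalfᴴ * D + 1 =
      (D - (Ahalf * Ahalfᴴ + Rother)⁻¹ * Ahalf)ᴴ * (Ahalf * Ahalfᴴ + Rother) *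
        (D - (Ahalf * Ahalfᴴ + Rother)⁻¹ * Ahalf) +
      (1 - Ahalfᴴ * (Ahalf * Ahalfᴴ + Rother)⁻¹ * Ahalf) := by
    intro D
    rw [conjTranspose_sub, conjTranspose_mul, hRinvH]
    simp only [Matrix.sub_mul, Matrix.mul_sub, Matrix.mul_assoc, hc1, hc2]
    abel
  constructor
  constructor
  · -- membership
    refine ⟨1 + Ahalfᴴ * Rother⁻¹ * Ahalf, (Ahalf * Ahalfᴴ + Rother)⁻¹ * Ahalf, hG, ?_⟩
    rw [hobj, hDecomp, sub_self, conjTranspose_zero]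
    simp only [Matrix.zero_mul, Matrix.mul_zero, zero_add, key, trace_one]
    simp
  · -- lower bound
    rintro x ⟨C, D, hC, rfl⟩
    rw [hobj, hDecomp D, Matrix.mul_add, trace_add, Complex.add_re]
    have h1 : 0 ≤ (C * ((D - (Ahalf * Ahalfᴴ + Rother)⁻¹ * Ahalf)ᴴ *
        (Ahalf * Ahalfᴴ + Rother) * (D - (Ahalf * Ahalfᴴ + Rother)⁻¹ * Ahalf))).trace.re :=
      trace_mul_re_nonneg' hC (hR.posSemidef.conjTranspose_mul_mul_same _)
    have h2 := key_ineq hC hEmPD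
    rw [Fintype.card_fin, hlog] at h2
    linarith
  · -- determinant identity
    have hdetEq : (1 + Ahalfᴴ * Rother⁻¹ * Ahalf).det =
        (1 + Rother⁻¹ * (Ahalf * Ahalfᴴ)).det := by
      rw [Matrix.mul_assoc, det_one_add_mul_comm, ← Matrix.mul_assoc, Matrix.mul_assoc]
    rw [hdetEq]
end

section
/- Let q_s ∈ ℂ^{M} and Δ_{s1,s2} ∈ ℂ^{N×N} for s₁,s₂ ∈ {1,...,S}, where Δ_{s,s} = ρ_s u_s u_s^H + ρ̃_s Σ_s and Δ_{s1,s2} = √(ρ_{s1} ρ_{s2}) φ̄_{s1} φ̄_{s2}^* u_{s1} u_{s2}^H for s₁ ≠ s₂, with |φ̄_s| ≤ 1, ρ_s, ρ̃_s ≥ 0, Σ_s PSD, u_s unit vectors. Then R = Σ_{s1,s2} (q_{s1}^H q_{s2}) Δ_{s1,s2} satisfies R = R½ R½^H where R½ = [ Σ_s φ̄_s √ρ_s u_s q_s^H , Σ̃_1 (I_N ⊗ q_1^H), ..., Σ̃_S (I_N ⊗ q_S^H) ] and Σ̃_s Σ̃_s^H = (1 − |φ̄_s|²) ρ_s u_s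 u_s^H + ρ̃_s Σ_s; in particular R is Hermitian positive semidefinite. -/
open Matrix ComplexOrder

/-- Lemma 1: closed-form factorization `R = R½ R½ᴴ` of the averaged signal
covariance `R = Σ_{s1,s2} (q_{s1}ᴴ q_{s2}) Δ_{s1,s2}`; in particular `R` is PSD. -/
theorem stmt_9 (S N M : ℕ)
    (q : Fin S → Fin M → ℂ) (u : Fin S → Fin N → ℂ)
    (hu : ∀ s, ∑ i, Complex.normSq (u s i) = 1)
    (ρ ρt : Fin S → ℝ) (hρ : ∀ s, 0 ≤ ρ s) (hρt : ∀ s, 0 ≤ ρt s)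
    (φ : Fin S → ℂ) (hφ : ∀ s, ‖φ s‖ ≤ 1)
    (Sig : Fin S → Matrix (Fin N) (Fin N) ℂ) (hSig : ∀ s, (Sig s).PosSemidef)
    (St : Fin S → Matrix (Fin N) (Fin N) ℂ)
    (hSt : ∀ s, St s * (St s)ᴴ =
      ((1 - Complex.normSq (φ s)) * ρ s : ℝ) • vecMulVec (u s) (star (u s))
        + (ρt s : ℝ) • Sig s)
    (Δ : Fin S → Fin S → Matrix (Fin N) (Fin N) ℂ)
    (hΔ : ∀ s1 s2, Δ s1 s2 =
      if s1 = s2 then (ρ s1 : ℝ) • vecMulVec (u s1) (star (u s1)) + (ρt s1 : ℝ) • Sig s1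
      else ((Real.sqrt (ρ s1 * ρ s2) : ℂ) * (φ s1 * star (φ s2))) •
        vecMulVec (u s1) (star (u s2)))
    (R : Matrix (Fin N) (Fin N) ℂ)
    (hR : R = ∑ s1, ∑ s2, (star (q s1) ⬝ᵥ q s2) • Δ s1 s2)
    (Rhalf : Matrix (Fin N) (Fin M ⊕ Fin S × Fin N × Fin M) ℂ)
    (hRhalf : ∀ i c, Rhalf i c = Sum.elim
      (fun m => ∑ s, φ s * (Real.sqrt (ρ s) : ℂ) * u s i * star (q s m))
      (fun p => St p.1 i p.2.1 * star (q p.1 p.2.2)) c) :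
    R = Rhalf * Rhalfᴴ ∧ R.PosSemidef := by
  classical
  have key : R = Rhalf * Rhalfᴴ := by
    funext i j
    -- expand the left side entrywise
    have hL : R i j = ∑ s1, ∑ s2, (star (q s1) ⬝ᵥ q s2) * Δ s1 s2 i j := by
      rw [hR]
      simp [Matrix.sum_apply, Matrix.smul_apply, smul_eq_mul]
    -- per-pair identity
    have main : ∀ s1 s2, (star (q s1) ⬝ᵥ q s2) * Δ s1 s2 i j
        = (φ s1 * (Real.sqrt (ρ s1) : ℂ) * u s1 i)
            * star (φ s2 * (Real.sqrt (ρ s2) : ℂ) * u s2 j)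
            * (star (q s1) ⬝ᵥ q s2)
          + (if s1 = s2 then (star (q s2) ⬝ᵥ q s2) * ((St s2 * (St s2)ᴴ) i j) else 0) := by
      intro s1 s2
      by_cases h : s1 = s2
      · subst h
        rw [hΔ s1 s1, if_pos rfl, hSt s1, if_pos rfl]
        simp only [Matrix.add_apply, Matrix.smul_apply, vecMulVec_apply,
          Pi.star_apply, smul_eq_mul, Complex.real_smul]
        have h1 : (Real.sqrt (ρ s1) : ℂ) * (Real.sqrt (ρ s1) : ℂ) = (ρ s1 : ℂ) := by
          rw [← Complex.ofReal_mul, Real.mul_self_sqrt (hρ s1)]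
        have h2 : φ s1 * star (φ s1) = (Complex.normSq (φ s1) : ℂ) := by
          rw [Complex.star_def, Complex.mul_conj]
        have h3 : (φ s1 * (Real.sqrt (ρ s1) : ℂ) * u s1 i)
              * star (φ s1 * (Real.sqrt (ρ s1) : ℂ) * u s1 j)
            = (Complex.normSq (φ s1) : ℂ) * (ρ s1 : ℂ) * (u s1 i * star (u s1 j)) := by
          simp only [star_mul', Complex.star_def, Complex.conj_ofReal, ← h1, ← h2]
          ring
        rw [h3]
        push_cast
        ring
      · simp only [if_neg h, hΔ s1 s2, if_neg h, Matrix.smul_apply, vecMulVec_apply,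
          Pi.star_apply, smul_eq_mul, add_zero]
        have hsq : (Real.sqrt (ρ s1 * ρ s2) : ℂ)
            = (Real.sqrt (ρ s1) : ℂ) * (Real.sqrt (ρ s2) : ℂ) := by
          rw [← Complex.ofReal_mul, Real.sqrt_mul (hρ s1)]
        simp only [star_mul', Complex.star_def, Complex.conj_ofReal, hsq]
        ring
    -- expand the right side entrywise
    have hT1 : (∑ m : Fin M,
          (∑ s, φ s * (Real.sqrt (ρ s) : ℂ) * u s i * star (q s m))
            * star (∑ s, φ s * (Real.sqrt (ρ s) : ℂ) * u s j * star (q s m)))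
        = ∑ s1, ∑ s2, (φ s1 * (Real.sqrt (ρ s1) : ℂ) * u s1 i)
            * star (φ s2 * (Real.sqrt (ρ s2) : ℂ) * u s2 j)
            * (star (q s1) ⬝ᵥ q s2) := by
      have step1 : ∀ m : Fin M,
          (∑ s, φ s * (Real.sqrt (ρ s) : ℂ) * u s i * star (q s m))
            * star (∑ s, φ s * (Real.sqrt (ρ s) : ℂ) * u s j * star (q s m))
          = ∑ s1, ∑ s2, (φ s1 * (Real.sqrt (ρ s1) : ℂ) * u s1 i)
              * star (φ s2 * (Real.sqrt (ρ s2) : ℂ) * u s2 j)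
              * (star (q s1 m) * q s2 m) := by
        intro m
        rw [star_sum, Finset.sum_mul_sum]
        refine Finset.sum_congr rfl fun s1 _ => Finset.sum_congr rfl fun s2 _ => ?_
        simp only [star_mul', star_star]
        ring
      calc (∑ m : Fin M,
          (∑ s, φ s * (Real.sqrt (ρ s) : ℂ) * u s i * star (q s m))
            * star (∑ s, φ s * (Real.sqrt (ρ s) : ℂ) * u s j * star (q s m)))
          = ∑ m : Fin M, ∑ s1, ∑ s2, (φ s1 * (Real.sqrt (ρ s1) : ℂ) * u s1 i)
              * star (φ s2 * (Real.sqrt (ρ s2) : ℂ) * u s2 j)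
              * (star (q s1 m) * q s2 m) := Finset.sum_congr rfl fun m _ => step1 m
        _ = ∑ s1, ∑ m : Fin M, ∑ s2, _ := Finset.sum_comm
        _ = ∑ s1, ∑ s2, ∑ m : Fin M, (φ s1 * (Real.sqrt (ρ s1) : ℂ) * u s1 i)
              * star (φ s2 * (Real.sqrt (ρ s2) : ℂ) * u s2 j)
              * (star (q s1 m) * q s2 m) :=
            Finset.sum_congr rfl fun s1 _ => Finset.sum_comm
        _ = _ := by
            refine Finset.sum_congr rfl fun s1 _ => Finset.sum_congr rfl fun s2 _ => ?_
            rw [← Finset.mul_sum, dotProduct]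
            simp only [Pi.star_apply]
    have hT2 : (∑ s, ∑ n, ∑ m,
          (St s i n * star (q s m)) * star (St s j n * star (q s m)))
        = ∑ s, (star (q s) ⬝ᵥ q s) * ((St s * (St s)ᴴ) i j) := by
      refine Finset.sum_congr rfl fun s _ => ?_
      rw [Matrix.mul_apply, dotProduct, Finset.sum_mul_sum]
      refine Finset.sum_comm.trans (Finset.sum_congr rfl fun n _ =>
        Finset.sum_congr rfl fun m _ => ?_)
      simp only [Matrix.conjTranspose_apply, Pi.star_apply, star_mul', star_star]
      ring
    have hRHS : (Rhalf * Rhalfᴴ) i j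
        = (∑ s1, ∑ s2, (φ s1 * (Real.sqrt (ρ s1) : ℂ) * u s1 i)
            * star (φ s2 * (Real.sqrt (ρ s2) : ℂ) * u s2 j)
            * (star (q s1) ⬝ᵥ q s2))
          + ∑ s, (star (q s) ⬝ᵥ q s) * ((St s * (St s)ᴴ) i j) := by
      rw [Matrix.mul_apply]
      simp only [Matrix.conjTranspose_apply, hRhalf, Fintype.sum_sum_type,
        Sum.elim_inl, Sum.elim_inr, Fintype.sum_prod_type]
      rw [hT1, hT2]
    rw [hL, hRHS]
    simp only [main, Finset.sum_add_distrib, Finset.sum_ite_eq, Finset.mem_univ, if_pos]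
  refine ⟨key, ?_⟩
  rw [key]
  exact Matrix.posSemidef_self_mul_conjTranspose Rhalf
end
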